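/- For every n, with fresh variables z_c, z'_c for each 3-clause c ∈ π(n) over x1,…,xn and a fresh variable y, define ψ_n = ((¬y ∧ ⋀_{c∈π(n)}(c ∨ ¬z_c)) ∨ (y ∧ x1 ∧ ⋯ ∧ xn)) ∧ ⋀_{c∈π(n)}(z_c ↔ ¬z'_c). Then for every 3CNF formula φ = c1 ∧ ⋯ ∧ ck with clauses in π(n), φ is unsatisfiable if and only if M_φ = {y, x1,…,xn} ∪ {z_{c1},…,z_{ck}} ∪ {z'_c : c ∉ φ} is a minimal model of ψ_n. -/

import Mathlib

/-! ### Machine model: deterministic single-tape Turing machines,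
with explicit time and space usage. -/

structure STM (σ : Type) where
  Q : Type
  qFin : Fintype Q
  init : Q
  /-- Transition function: `none` means halt; otherwise
  (new state, written symbol (`none` = blank), move-right?). -/
  δ : Q → Option σ → Option (Q × Option σ × Bool)

namespace STM

variable {σ : Type}

structure Cfg (M : STM σ) where
  q : M.Q
  head : ℕ
  tape : ℕ → Option σ

def initCfg (M : STM σ) (x : List σ) : M.Cfg :=
  ⟨M.init, 0, fun i => x[i]?⟩

def step (M : STM σ) (c : M.Cfg) : Option M.Cfg :=
  (M.δ c.q (c.tape c.head)).map fun t =>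
    ⟨t.1, if t.2.2 then c.head + 1 else c.head - 1,
      fun i => if i = c.head then t.2.1 else c.tape i⟩

def step1 (M : STM σ) (c : M.Cfg) : M.Cfg := (M.step c).getD c

def run (M : STM σ) (n : ℕ) (c : M.Cfg) : M.Cfg := M.step1^[n] c

def Halted (M : STM σ) (c : M.Cfg) : Prop := M.step c = none

/-- The tape holds exactly the string `l`, followed by blanks. -/
def Represents (t : ℕ → Option σ) (l : List σ) : Prop := ∀ i, t i = l[i]?

/-- `M` computes `f` within time bound `T` (with respect to injections of the
input and output alphabets into the tape alphabet). -/
def ComputesInTime {α β : Type} (M : STM σ) (ια : α → σ) (ιβ : β → σ)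
    (f : List α → List β) (T : ℕ → ℕ) : Prop :=
  ∀ x : List α, ∃ n, n ≤ T x.length ∧
    M.Halted (M.run n (M.initCfg (x.map ια))) ∧
    Represents (M.run n (M.initCfg (x.map ια))).tape ((f x).map ιβ)

/-- `M` computes `f` within space bound `S`: the computation halts with the
correct output and the head never leaves the first `S |x|` cells. -/
def ComputesInSpace {α β : Type} (M : STM σ) (ια : α → σ) (ιβ : β → σ)
    (f : List α → List β) (S : ℕ → ℕ) : Prop :=
  ∀ x : List α, ∃ n,
    M.Halted (M.run n (M.initCfg (x.map ια))) ∧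
    Represents (M.run n (M.initCfg (x.map ια))).tape ((f x).map ιβ) ∧
    ∀ m, m ≤ n → (M.run m (M.initCfg (x.map ια))).head ≤ S x.length

end STM

/-- `f` is computable in polynomial time (by a deterministic Turing machine with
some finite tape alphabet). -/
def PolyTimeFun {α β : Type} (f : List α → List β) : Prop :=
  ∃ (σ : Type) (_ : Fintype σ) (ια : α → σ) (ιβ : β → σ) (M : STM σ) (p : Polynomial ℕ),
    Function.Injective ια ∧ Function.Injective ιβ ∧
    M.ComputesInTime ια ιβ f (fun n => p.eval n)

/-- `f` is computable in polynomial space. -/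
def PolySpaceFun {α β : Type} (f : List α → List β) : Prop :=
  ∃ (σ : Type) (_ : Fintype σ) (ια : α → σ) (ιβ : β → σ) (M : STM σ) (p : Polynomial ℕ),
    Function.Injective ια ∧ Function.Injective ιβ ∧
    M.ComputesInSpace ια ιβ f (fun n => p.eval n)

/-- Standard encoding of a pair of strings over a combined alphabet. -/
def encodePair {α β : Type} (x : List α) (y : List β) : List (α ⊕ β) :=
  x.map Sum.inl ++ y.map Sum.inr

/-- A two-argument function is polynomial-time computable if the corresponding
function on encoded pairs is. -/
def PolyTimeFun₂ {α β γ : Type} (g : List α → List β → List γ) : Prop :=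
  ∃ g' : List (α ⊕ β) → List γ, PolyTimeFun g' ∧ ∀ x y, g' (encodePair x y) = g x y

/-- A language is polynomial-time decidable. -/
def PolyTimeDecidable {α : Type} (L : Set (List α)) : Prop :=
  ∃ f : List α → List Bool, PolyTimeFun f ∧ ∀ x, x ∈ L ↔ f x = [true]

/-- `L` is in NP: membership has polynomial-size certificates verifiable in
polynomial time. -/
def InNP {α : Type} (L : Set (List α)) : Prop :=
  ∃ (p : Polynomial ℕ) (V : Set (List (α ⊕ Bool))), PolyTimeDecidable V ∧
    ∀ x, x ∈ L ↔ ∃ w : List Bool, w.length ≤ p.eval x.length ∧ encodePair x w ∈ V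

def InCoNP {α : Type} (L : Set (List α)) : Prop := InNP Lᶜ

/-- Polynomial-time many-one reducibility of languages. -/
def ManyOneRed {α β : Type} (L₁ : Set (List α)) (L₂ : Set (List β)) : Prop :=
  ∃ f : List α → List β, PolyTimeFun f ∧ ∀ x, x ∈ L₁ ↔ f x ∈ L₂

def NPComplete {α : Type} (L : Set (List α)) : Prop :=
  InNP L ∧ ∀ (β : Type) (L' : Set (List β)), InNP L' → ManyOneRed L' L

def CoNPComplete {α : Type} (L : Set (List α)) : Prop :=
  InCoNP L ∧ ∀ (β : Type) (L' : Set (List β)), InCoNP L' → ManyOneRed L' L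

def NPneqCoNP : Prop := ¬ ∀ (α : Type) (L : Set (List α)), InNP L ↔ InCoNP L

/-- `L` is in coNP/poly: a coNP predicate together with polynomial-size advice
depending only on the input length decides `L`. -/
def InCoNPpoly {α : Type} (L : Set (List α)) : Prop :=
  ∃ (p : Polynomial ℕ) (adv : ℕ → List Bool) (V : Set (List (α ⊕ Bool))),
    InCoNP V ∧ (∀ n, (adv n).length ≤ p.eval n) ∧
    ∀ x, x ∈ L ↔ encodePair x (adv x.length) ∈ V

def NPnotSubCoNPpoly : Prop := ¬ ∀ (α : Type) (L : Set (List α)), InNP L → InCoNPpoly L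

/-! ### Logic systems and model-equivalent reductions -/

/-- A logic system `(Γ, Δ, T, S, R)` (Definition 1): theories are strings over
`Γ`, interpretations are strings over `Δ`, and `R` is the satisfaction
relation. -/
structure LogicSystem (Γ Δ : Type) where
  T : Set (List Γ)
  S : Set (List Δ)
  R : List Γ → List Δ → Prop

namespace LogicSystem

variable {Γ Δ : Type}

/-- The set of `R`-models of a theory `t`. -/
def Mod (L : LogicSystem Γ Δ) (t : List Γ) : Set (List Δ) := {w | w ∈ L.S ∧ L.R t w}

/-- A poly-size system: `R t w` implies `|w| = p (|t|)` for a fixed polynomial. -/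
def PolySize (L : LogicSystem Γ Δ) : Prop :=
  ∃ p : Polynomial ℕ, ∀ t w, L.R t w → w.length = p.eval t.length

/-- The satisfaction relation `R`, as a language of encoded pairs. -/
def RelLang (L : LogicSystem Γ Δ) : Set (List (Γ ⊕ Δ)) :=
  {l | ∃ t w, l = encodePair t w ∧ L.R t w}

/-- The model-checking problem: given a theory `t ∈ T` and an interpretation
`w ∈ S`, does `w` satisfy `t`? -/
def ModelCheckLang (L : LogicSystem Γ Δ) : Set (List (Γ ⊕ Δ)) :=
  {l | ∃ t w, l = encodePair t w ∧ t ∈ L.T ∧ w ∈ L.S ∧ L.R t w}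

/-- The model-existence problem: `{t ∈ T : Mod_R(t) ≠ ∅}`. -/
def ModelExistLang (L : LogicSystem Γ Δ) : Set (List Γ) :=
  {t | t ∈ L.T ∧ (L.Mod t).Nonempty}

end LogicSystem

/-- Poly-time model-equivalent reduction (Definition 2): a poly-time translation
`f` of theories, and a poly-time map `g` such that `g t` is a bijection from the
models of `t` onto the models of `f t`. -/
def PtimeModelEquivRed {Γ₁ Δ₁ Γ₂ Δ₂ : Type}
    (L₁ : LogicSystem Γ₁ Δ₁) (L₂ : LogicSystem Γ₂ Δ₂) : Prop :=
  ∃ (f : List Γ₁ → List Γ₂) (g : List Γ₁ → List Δ₁ → List Δ₂),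
    PolyTimeFun f ∧ PolyTimeFun₂ g ∧
    ∀ t ∈ L₁.T, f t ∈ L₂.T ∧ Set.BijOn (g t) (L₁.Mod t) (L₂.Mod (f t))

/-- Poly-space model-equivalent reduction: as above, but `f` need only be
computable in polynomial space. -/
def PspaceModelEquivRed {Γ₁ Δ₁ Γ₂ Δ₂ : Type}
    (L₁ : LogicSystem Γ₁ Δ₁) (L₂ : LogicSystem Γ₂ Δ₂) : Prop :=
  ∃ (f : List Γ₁ → List Γ₂) (g : List Γ₁ → List Δ₁ → List Δ₂),
    PolySpaceFun f ∧ PolyTimeFun₂ g ∧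
    ∀ t ∈ L₁.T, f t ∈ L₂.T ∧ Set.BijOn (g t) (L₁.Mod t) (L₂.Mod (f t))

/-! ### Propositional formulas and existentially quantified propositional formulas -/

inductive PropForm where
  | tru : PropForm
  | fls : PropForm
  | var (n : ℕ) : PropForm
  | neg (φ : PropForm) : PropForm
  | and (φ ψ : PropForm) : PropForm
  | or (φ ψ : PropForm) : PropForm
  deriving DecidableEq

namespace PropForm

def eval (v : ℕ → Bool) : PropForm → Bool
  | tru => true
  | fls => false
  | var n => v n
  | neg φ => !(eval v φ)
  | and φ ψ => eval v φ && eval v ψ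
  | or φ ψ => eval v φ || eval v ψ

def vars : PropForm → Finset ℕ
  | tru => ∅
  | fls => ∅
  | var n => {n}
  | neg φ => vars φ
  | and φ ψ => vars φ ∪ vars ψ
  | or φ ψ => vars φ ∪ vars ψ

def iff (φ ψ : PropForm) : PropForm := or (and φ ψ) (and (neg φ) (neg ψ))

def conj : List PropForm → PropForm
  | [] => tru
  | φ :: l => and φ (conj l)

def disj : List PropForm → PropForm
  | [] => fls
  | φ :: l => or φ (disj l)

/-- A formula is satisfiable if some assignment makes it true. -/
def Satisfiable (φ : PropForm) : Prop := ∃ v : ℕ → Bool, φ.eval v = true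

/-- A model of `φ`, viewed as the set of variables assigned `true`. -/
def IsModel (φ : PropForm) (M : Finset ℕ) : Prop :=
  M ⊆ φ.vars ∧ φ.eval (fun i => decide (i ∈ M)) = true

/-- A minimal model: no proper subset is a model. -/
def IsMinModel (φ : PropForm) (M : Finset ℕ) : Prop :=
  φ.IsModel M ∧ ∀ M', M' ⊂ M → ¬ φ.IsModel M'

end PropForm

/-- An existentially quantified propositional formula `∃ bound, matrix`
(free variables allowed). -/
structure EPF where
  bound : Finset ℕ
  matrix : PropForm

namespace EPF

def free (Φ : EPF) : Finset ℕ := Φ.matrix.vars \ Φ.bound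

/-- Satisfaction of `Φ` by an assignment of its free variables. -/
def Sat (Φ : EPF) (v : ℕ → Bool) : Prop :=
  ∃ u : ℕ → Bool, (∀ i ∈ Φ.free, u i = v i) ∧ Φ.matrix.eval u = true

/-- A model of `Φ`: a subset of the free variables whose characteristic
assignment satisfies `Φ`. -/
def IsModel (Φ : EPF) (M : Finset ℕ) : Prop :=
  M ⊆ Φ.free ∧ Φ.Sat (fun i => decide (i ∈ M))

def IsMinModel (Φ : EPF) (M : Finset ℕ) : Prop :=
  Φ.IsModel M ∧ ∀ M', M' ⊂ M → ¬ Φ.IsModel M'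

end EPF

/-! ### String encodings of formulas, assignments, and the concrete systems -/

inductive PFAlpha where
  | x | bar | lnot | land | lor | exq | lp | rp | top | bot
  deriving DecidableEq

instance : Fintype PFAlpha :=
  ⟨{.x, .bar, .lnot, .land, .lor, .exq, .lp, .rp, .top, .bot}, fun a => by cases a <;> simp⟩

def encodeVar (n : ℕ) : List PFAlpha := PFAlpha.x :: List.replicate (n + 1) PFAlpha.bar

def PropForm.encode : PropForm → List PFAlpha
  | .tru => [.top]
  | .fls => [.bot]
  | .var n => encodeVar n
  | .neg φ => .lnot :: φ.encode
  | .and φ ψ => .lp :: (φ.encode ++ .land :: (ψ.encode ++ [.rp]))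
  | .or φ ψ => .lp :: (φ.encode ++ .lor :: (ψ.encode ++ [.rp]))

def EPF.encode (Φ : EPF) : List PFAlpha :=
  ((Φ.bound.sort (· ≤ ·)).map fun i => PFAlpha.exq :: encodeVar i).flatten ++ Φ.matrix.encode

/-- Decode a `{0,1}`-string as a subset of a (sorted) finite set of variables. -/
def decodeM (F : Finset ℕ) (w : List Bool) : Finset ℕ :=
  ((((F.sort (· ≤ ·)).zip w).filter fun p => p.2).map fun p => p.1).toFinset

def SatRel (t : List PFAlpha) (w : List Bool) : Prop :=
  ∃ φ : PropForm, t = φ.encode ∧ w.length = φ.vars.card ∧ φ.IsModel (decodeM φ.vars w)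

def MinSatRel (t : List PFAlpha) (w : List Bool) : Prop :=
  ∃ φ : PropForm, t = φ.encode ∧ w.length = φ.vars.card ∧ φ.IsMinModel (decodeM φ.vars w)

def FSatRel (t : List PFAlpha) (w : List Bool) : Prop :=
  ∃ Φ : EPF, t = Φ.encode ∧ w.length = Φ.free.card ∧ Φ.IsModel (decodeM Φ.free w)

def FMinSatRel (t : List PFAlpha) (w : List Bool) : Prop :=
  ∃ Φ : EPF, t = Φ.encode ∧ w.length = Φ.free.card ∧ Φ.IsMinModel (decodeM Φ.free w)

/-- The system (PF, TA, Sat). -/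
def SysSat : LogicSystem PFAlpha Bool :=
  ⟨{t | ∃ φ : PropForm, t = φ.encode}, Set.univ, SatRel⟩

/-- The system (PF, TA, MinSat). -/
def SysMinSat : LogicSystem PFAlpha Bool :=
  ⟨{t | ∃ φ : PropForm, t = φ.encode}, Set.univ, MinSatRel⟩

/-- The system (∃PF, TA, FSat). -/
def SysFSat : LogicSystem PFAlpha Bool :=
  ⟨{t | ∃ Φ : EPF, t = Φ.encode}, Set.univ, FSatRel⟩

/-- The system (∃PF, TA, FMinSat). -/
def SysFMinSat : LogicSystem PFAlpha Bool :=
  ⟨{t | ∃ Φ : EPF, t = Φ.encode}, Set.univ, FMinSatRel⟩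

/-! ### 3-clauses over variables `x₁,…,xₙ`, the formulas `Ψₙ` and `ψₙ` -/

/-- A 3-clause over `n` variables: up to three literals. -/
def Cl (n : ℕ) : Type := Fin 3 → Option (Fin n × Bool)

instance (n : ℕ) : Fintype (Cl n) := inferInstanceAs (Fintype (Fin 3 → Option (Fin n × Bool)))
instance (n : ℕ) : DecidableEq (Cl n) := inferInstanceAs (DecidableEq (Fin 3 → Option (Fin n × Bool)))

def litForm {n : ℕ} (l : Fin n × Bool) : PropForm :=
  if l.2 then .var l.1.1 else .neg (.var l.1.1)

/-- The 3-clause `c` as a propositional formula (a disjunction of literals). -/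
def clauseForm {n : ℕ} (c : Cl n) : PropForm :=
  PropForm.disj (((List.finRange 3).filterMap c).map litForm)

/-- The list of all 3-clauses over `n` variables (the set `π(n)`). -/
noncomputable def clList (n : ℕ) : List (Cl n) := (Finset.univ : Finset (Cl n)).toList

/-- An index for each 3-clause. -/
noncomputable def clIdx {n : ℕ} (c : Cl n) : ℕ := (Fintype.equivFin (Cl n) c : ℕ)

/-- The variable `z_c`. -/
noncomputable def zIdx (n : ℕ) (c : Cl n) : ℕ := n + clIdx c

/-- The variable `z'_c`. -/
noncomputable def z'Idx (n : ℕ) (c : Cl n) : ℕ := n + Fintype.card (Cl n) + clIdx c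

/-- The variable `y`. -/
def yIdx (n : ℕ) : ℕ := n + 2 * Fintype.card (Cl n)

/-- `Ψₙ = ∃x₁⋯∃xₙ ⋀_{c ∈ π(n)} (c ∨ ¬z_c)`. -/
noncomputable def Psi (n : ℕ) : EPF :=
  ⟨Finset.range n,
    PropForm.conj ((clList n).map fun c =>
      .or (clauseForm c) (.neg (.var (zIdx n c))))⟩

/-- A 3CNF formula `c₁ ∧ ⋯ ∧ c_k` with clauses from `π(n)`. -/
def phiForm {n : ℕ} (cs : List (Cl n)) : PropForm := PropForm.conj (cs.map clauseForm)

/-- The assignment `M_φ = {z_{c₁},…,z_{c_k}}` for `φ = c₁ ∧ ⋯ ∧ c_k`. -/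
noncomputable def Mphi {n : ℕ} (cs : List (Cl n)) : Finset ℕ :=
  Finset.image (zIdx n) cs.toFinset

/-- `ψₙ = ((¬y ∧ ⋀_{c}(c ∨ ¬z_c)) ∨ (y ∧ x₁ ∧ ⋯ ∧ xₙ)) ∧ ⋀_c (z_c ↔ ¬z'_c)`. -/
noncomputable def psi (n : ℕ) : PropForm :=
  .and
    (.or
      (.and (.neg (.var (yIdx n)))
        (PropForm.conj ((clList n).map fun c =>
          .or (clauseForm c) (.neg (.var (zIdx n c))))))
      (.and (.var (yIdx n)) (PropForm.conj ((List.range n).map PropForm.var))))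
    (PropForm.conj ((clList n).map fun c =>
      PropForm.iff (.var (zIdx n c)) (.neg (.var (z'Idx n c)))))

/-- `M_φ = {y, x₁,…,xₙ} ∪ {z_c : c ∈ φ} ∪ {z'_c : c ∉ φ}`. -/
noncomputable def Mphi' {n : ℕ} (cs : List (Cl n)) : Finset ℕ :=
  insert (yIdx n)
    (Finset.range n ∪ Finset.image (zIdx n) cs.toFinset ∪
      Finset.image (z'Idx n) (Finset.univ \ cs.toFinset))

/-! The set `M_φ` is always a model of `ψₙ`, through the disjunct `y ∧ x₁ ∧ ⋯ ∧ xₙ`. The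
constraints `z_c ↔ ¬z'_c` force every model `M ⊆ M_φ` to contain exactly the `z`- and
`z'`-variables of `M_φ`, so a proper submodel must drop `y` (it cannot drop an `xᵢ` while keeping
`y`). Without `y` it satisfies `⋀_c (c ∨ ¬z_c)` with `z_c` true for every clause of `φ`, hence its
`x`-part satisfies `φ`. Conversely, a satisfying assignment of `φ`, together with the `z`- and
`z'`-part of `M_φ`, is a proper submodel. -/

namespace PropForm

lemma eval_conj (v : ℕ → Bool) (l : List PropForm) :
    (conj l).eval v = true ↔ ∀ φ ∈ l, φ.eval v = true := by
  induction l with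
  | nil => simp [conj, eval]
  | cons a l ih => simp [conj, eval, ih]

lemma eval_iff (v : ℕ → Bool) (φ ψ : PropForm) :
    (PropForm.iff φ ψ).eval v = true ↔ φ.eval v = ψ.eval v := by
  simp only [PropForm.iff, eval]
  cases φ.eval v <;> cases ψ.eval v <;> simp

lemma mem_vars_conj {x : ℕ} (l : List PropForm) :
    x ∈ (conj l).vars ↔ ∃ φ ∈ l, x ∈ φ.vars := by
  induction l with
  | nil => simp [conj, vars]
  | cons a l ih => simp [conj, vars, ih]

lemma mem_vars_disj {x : ℕ} (l : List PropForm) :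
    x ∈ (disj l).vars ↔ ∃ φ ∈ l, x ∈ φ.vars := by
  induction l with
  | nil => simp [disj, vars]
  | cons a l ih => simp [disj, vars, ih]

lemma eval_congr {u v : ℕ → Bool} (φ : PropForm) (h : ∀ i ∈ φ.vars, u i = v i) :
    φ.eval u = φ.eval v := by
  induction φ with
  | tru | fls => rfl
  | var m => exact h m (by simp [vars])
  | neg φ ih => simp only [eval, ih (fun i hi => h i (by simpa [vars] using hi))]
  | and φ ψ ih₁ ih₂ | or φ ψ ih₁ ih₂ =>
      simp only [eval, ih₁ (fun i hi => h i (by simp [vars, hi])),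
        ih₂ (fun i hi => h i (by simp [vars, hi]))]

end PropForm

lemma mem_clList {n : ℕ} (c : Cl n) : c ∈ clList n :=
  Finset.mem_toList.mpr (Finset.mem_univ c)

lemma lt_of_mem_vars_clauseForm {n : ℕ} (c : Cl n) {i : ℕ} (h : i ∈ (clauseForm c).vars) :
    i < n := by
  obtain ⟨_, hφ, hi⟩ := (PropForm.mem_vars_disj _).mp h
  obtain ⟨⟨⟨j, hj⟩, b⟩, -, rfl⟩ := List.mem_map.mp hφ
  cases b <;> simp [litForm, PropForm.vars] at hi <;> omega

section Indices

variable {n : ℕ}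

lemma clIdx_lt (c : Cl n) : clIdx c < Fintype.card (Cl n) :=
  (Fintype.equivFin (Cl n) c).isLt

lemma clIdx_injective : Function.Injective (clIdx (n := n)) :=
  fun _ _ h => (Fintype.equivFin (Cl n)).injective (Fin.val_injective h)

lemma zIdx_injective : Function.Injective (zIdx n) :=
  fun _ _ h => clIdx_injective (Nat.add_left_cancel h)

lemma z'Idx_injective : Function.Injective (z'Idx n) :=
  fun _ _ h => clIdx_injective (Nat.add_left_cancel h)

lemma le_zIdx (c : Cl n) : n ≤ zIdx n c := Nat.le_add_right _ _

lemma le_z'Idx (c : Cl n) : n ≤ z'Idx n c := by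
  unfold z'Idx; omega

lemma le_yIdx : n ≤ yIdx n := Nat.le_add_right _ _

lemma zIdx_ne_yIdx (c : Cl n) : zIdx n c ≠ yIdx n := by
  have := clIdx_lt c; unfold zIdx yIdx; omega

lemma z'Idx_ne_yIdx (c : Cl n) : z'Idx n c ≠ yIdx n := by
  have := clIdx_lt c; unfold z'Idx yIdx; omega

lemma zIdx_ne_z'Idx (c c' : Cl n) : zIdx n c ≠ z'Idx n c' := by
  have := clIdx_lt c; unfold zIdx z'Idx; omega

end Indices

section Mphi'

variable {n : ℕ} {cs : List (Cl n)}

lemma mem_Mphi' {i : ℕ} :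
    i ∈ Mphi' cs ↔ i = yIdx n ∨ i < n ∨ (∃ c ∈ cs, zIdx n c = i) ∨
      ∃ c, c ∉ cs ∧ z'Idx n c = i := by
  simp [Mphi']

lemma yIdx_mem_Mphi' : yIdx n ∈ Mphi' cs :=
  mem_Mphi'.mpr (Or.inl rfl)

lemma mem_Mphi'_of_lt {i : ℕ} (h : i < n) : i ∈ Mphi' cs :=
  mem_Mphi'.mpr (Or.inr (Or.inl h))

lemma zIdx_mem_Mphi' {c : Cl n} : zIdx n c ∈ Mphi' cs ↔ c ∈ cs := by
  refine ⟨fun h => ?_, fun h => mem_Mphi'.mpr (Or.inr (Or.inr (Or.inl ⟨c, h, rfl⟩)))⟩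
  rcases mem_Mphi'.mp h with h | h | ⟨c', hc', h⟩ | ⟨c', -, h⟩
  · exact absurd h (zIdx_ne_yIdx c)
  · exact absurd h (not_lt.mpr (le_zIdx c))
  · rwa [← zIdx_injective h]
  · exact absurd h.symm (zIdx_ne_z'Idx c c')

lemma z'Idx_mem_Mphi' {c : Cl n} : z'Idx n c ∈ Mphi' cs ↔ c ∉ cs := by
  refine ⟨fun h => ?_, fun h => mem_Mphi'.mpr (Or.inr (Or.inr (Or.inr ⟨c, h, rfl⟩)))⟩
  rcases mem_Mphi'.mp h with h | h | ⟨c', -, h⟩ | ⟨c', hc', h⟩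
  · exact absurd h (z'Idx_ne_yIdx c)
  · exact absurd h (not_lt.mpr (le_z'Idx c))
  · exact absurd h (zIdx_ne_z'Idx c' c)
  · rwa [← z'Idx_injective h]

lemma Mphi'_subset_vars_psi (cs : List (Cl n)) : Mphi' cs ⊆ (psi n).vars := by
  intro i hi
  simp only [psi, PropForm.vars, Finset.mem_union, PropForm.mem_vars_conj, List.mem_map]
  rcases mem_Mphi'.mp hi with rfl | h | ⟨c, -, rfl⟩ | ⟨c, -, rfl⟩
  · simp
  · exact Or.inl (Or.inr (Or.inr ⟨_, ⟨i, List.mem_range.mpr h, rfl⟩, by simp [PropForm.vars]⟩))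
  all_goals
    exact Or.inr ⟨_, ⟨c, mem_clList c, rfl⟩, by simp [PropForm.iff, PropForm.vars]⟩

end Mphi'

section Psi

variable {n : ℕ} {cs : List (Cl n)}

lemma eval_psi_iff (M : Finset ℕ) :
    (psi n).eval (fun i => decide (i ∈ M)) = true ↔
      ((yIdx n ∉ M ∧ ∀ c : Cl n,
          (clauseForm c).eval (fun i => decide (i ∈ M)) = true ∨ zIdx n c ∉ M) ∨
        (yIdx n ∈ M ∧ ∀ i < n, i ∈ M)) ∧
      ∀ c : Cl n, (zIdx n c ∈ M ↔ z'Idx n c ∉ M) := by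
  simp [psi, PropForm.eval, PropForm.eval_conj, PropForm.eval_iff, mem_clList]
  simp only [← decide_not, decide_eq_decide, implies_true]

lemma isModel_psi_Mphi' (cs : List (Cl n)) : (psi n).IsModel (Mphi' cs) := by
  refine ⟨Mphi'_subset_vars_psi cs, (eval_psi_iff _).mpr
    ⟨Or.inr ⟨yIdx_mem_Mphi', fun i => mem_Mphi'_of_lt⟩, fun c => ?_⟩⟩
  rw [zIdx_mem_Mphi', z'Idx_mem_Mphi', not_not]

lemma zIdx_mem_iff_of_isModel_psi {M : Finset ℕ} (hsub : M ⊆ Mphi' cs)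
    (hM : (psi n).IsModel M) (c : Cl n) : zIdx n c ∈ M ↔ c ∈ cs := by
  have hzz' := ((eval_psi_iff M).mp hM.2).2 c
  refine ⟨fun h => zIdx_mem_Mphi'.mp (hsub h), fun hc => hzz'.mpr fun h => ?_⟩
  exact z'Idx_mem_Mphi'.mp (hsub h) hc

lemma z'Idx_mem_of_isModel_psi {M : Finset ℕ} (hsub : M ⊆ Mphi' cs)
    (hM : (psi n).IsModel M) {c : Cl n} (hc : c ∉ cs) : z'Idx n c ∈ M := by
  have hzz' := ((eval_psi_iff M).mp hM.2).2 c
  by_contra h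
  exact hc (zIdx_mem_Mphi'.mp (hsub (hzz'.mpr h)))

lemma satisfiable_of_ssubset_of_isModel_psi {M : Finset ℕ} (hssub : M ⊂ Mphi' cs)
    (hM : (psi n).IsModel M) : (phiForm cs).Satisfiable := by
  have hz := zIdx_mem_iff_of_isModel_psi hssub.subset hM
  rcases ((eval_psi_iff M).mp hM.2).1 with ⟨-, hclauses⟩ | ⟨hy, hx⟩
  · refine ⟨fun i => decide (i ∈ M), (PropForm.eval_conj _ _).mpr fun φ hφ => ?_⟩
    obtain ⟨c, hc, rfl⟩ := List.mem_map.mp hφ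
    exact (hclauses c).resolve_right (not_not.mpr ((hz c).mpr hc))
  · refine absurd (fun i hi => ?_) hssub.not_subset
    rcases mem_Mphi'.mp hi with rfl | h | ⟨c, hc, rfl⟩ | ⟨c, hc, rfl⟩
    · exact hy
    · exact hx i h
    · exact (hz c).mpr hc
    · exact z'Idx_mem_of_isModel_psi hssub.subset hM hc

/-- Replace `y, x₁, …, xₙ` in `M_φ` by the variables `xᵢ` that are true under `v`. -/
lemma exists_ssubset_isModel_psi_of_satisfiable (h : (phiForm cs).Satisfiable) :
    ∃ M ⊂ Mphi' cs, (psi n).IsModel M := by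
  obtain ⟨v, hv⟩ := h
  set M := (Mphi' cs).filter fun i => i ≠ yIdx n ∧ (i < n → v i = true) with hMdef
  have hy : yIdx n ∉ M := by simp [hMdef]
  have hx : ∀ i < n, decide (i ∈ M) = v i := fun i hi => by
    have := (le_yIdx (n := n)).trans_lt' hi
    simp [hMdef, mem_Mphi'_of_lt hi, hi, this.ne]
  have hz : ∀ c : Cl n, zIdx n c ∈ M ↔ c ∈ cs := fun c => by
    simp [hMdef, zIdx_ne_yIdx, (le_zIdx c).not_gt, zIdx_mem_Mphi']
  have hz' : ∀ c : Cl n, z'Idx n c ∈ M ↔ c ∉ cs := fun c => by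
    simp [hMdef, z'Idx_ne_yIdx, (le_z'Idx c).not_gt, z'Idx_mem_Mphi']
  refine ⟨M, Finset.ssubset_iff_subset_ne.mpr ⟨Finset.filter_subset _ _,
    fun hM => hy (hM ▸ yIdx_mem_Mphi')⟩, ?_⟩
  refine ⟨(Finset.filter_subset _ _).trans (Mphi'_subset_vars_psi cs),
    (eval_psi_iff M).mpr ⟨Or.inl ⟨hy, fun c => ?_⟩, fun c => by rw [hz, hz', not_not]⟩⟩
  by_cases hc : c ∈ cs
  · left
    rw [PropForm.eval_congr _ fun i hi => hx i (lt_of_mem_vars_clauseForm c hi)]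
    exact (PropForm.eval_conj _ _).mp hv _ (List.mem_map_of_mem hc)
  · exact Or.inr ((hz c).not.mpr hc)

end Psi

/-- A 3CNF formula `φ = c₁ ∧ ⋯ ∧ c_k` with clauses from
`π(n)` is unsatisfiable iff
`M_φ = {y, x₁,…,xₙ} ∪ {z_{c₁},…,z_{c_k}} ∪ {z'_c : c ∉ φ}` is a minimal
model of `ψₙ`. -/
theorem unsat_iff_min_model_psi (n : ℕ) (cs : List (Cl n)) :
    ¬ (phiForm cs).Satisfiable ↔ (psi n).IsMinModel (Mphi' cs) := by
  constructor
  · intro hunsat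
    exact ⟨isModel_psi_Mphi' cs, fun M hssub hM =>
      hunsat (satisfiable_of_ssubset_of_isModel_psi hssub hM)⟩
  · rintro ⟨-, hmin⟩ hsat
    obtain ⟨M, hssub, hM⟩ := exists_ssubset_isModel_psi_of_satisfiable hsat
    exact hmin M hssub hM
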